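/- Let x be a counital comonoid object in a monoidal category C, F = Hom_C(x, −) with its induced lax monoidal structure, and G : Cᵒᵖ → D a lax monoidal functor to a cocomplete braided monoidal category D. Then the isomorphism G ⊗_C F ≅ G(x) (evaluation of the coend at the corepresenting object) is an isomorphism of monoid objects in D, where G(x) has the algebra structure induced by G(x) ⊗ G(x) → G(x ⊗ x) → G(x) (using the comultiplication of x) and 1_D → G(1_C) → G(x) (using the counit of x). -/

import Mathlib

open CategoryTheory CategoryTheory.Limits CategoryTheory.MonoidalCategory Opposite

noncomputable section

universe v u

variable {C : Type v} [SmallCategory C] {D : Type u} [Category.{v} D] [HasColimits D]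

/-- The source of the coequalizer diagram defining the tensor product of functors
`G ⊗_C F`: the coproduct `∐_{f : c → c'} G(c') · F(c)`. -/
def tensorLeftObj (F : C ⥤ Type v) (G : Cᵒᵖ ⥤ D) : D :=
  ∐ (fun p : Σ c c' : C, (c ⟶ c') × F.obj c => G.obj (op p.2.1))

/-- The target of the coequalizer diagram defining `G ⊗_C F`. -/
def tensorRightObj (F : C ⥤ Type v) (G : Cᵒᵖ ⥤ D) : D :=
  ∐ (fun p : Σ c : C, F.obj c => G.obj (op p.1))

/-- The first map, acting by `F(f)` on the `F`-coordinate. -/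
def tensorMapF (F : C ⥤ Type v) (G : Cᵒᵖ ⥤ D) : tensorLeftObj F G ⟶ tensorRightObj F G :=
  Sigma.desc fun p =>
    Sigma.ι (fun q : Σ c : C, F.obj c => G.obj (op q.1)) ⟨p.2.1, F.map p.2.2.1 p.2.2.2⟩

/-- The second map, acting by `G(f)` on the `G`-coordinate. -/
def tensorMapG (F : C ⥤ Type v) (G : Cᵒᵖ ⥤ D) : tensorLeftObj F G ⟶ tensorRightObj F G :=
  Sigma.desc fun p =>
    G.map p.2.2.1.op ≫ Sigma.ι (fun q : Σ c : C, F.obj c => G.obj (op q.1)) ⟨p.1, p.2.2.2⟩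

/-- The tensor product (coend) `G ⊗_C F` as the coequalizer of the two maps. -/
def functorTensor (F : C ⥤ Type v) (G : Cᵒᵖ ⥤ D) : D :=
  coequalizer (tensorMapF F G) (tensorMapG F G)

/-- The canonical coprojection `G(c) ⟶ G ⊗_C F` indexed by `w ∈ F(c)`. -/
def coendPr (F : C ⥤ Type v) (G : Cᵒᵖ ⥤ D) (c : C) (w : F.obj c) :
    G.obj (op c) ⟶ functorTensor F G :=
  Sigma.ι (fun q : Σ c : C, F.obj c => G.obj (op q.1)) ⟨c, w⟩ ≫ coequalizer.π _ _

/-! Co-Yoneda: every coprojection of `G ⊗_C h^x`, indexed by `w : x ⟶ c`, factors as `G(w)`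
followed by the one indexed by `𝟙 x`, so the latter inverts `Φ`. Since `⊗` preserves colimits
in each variable, maps out of the tensor square of the coend are determined on tensor products
of coprojections, where compatibility with the multiplications is the naturality of `μ`. -/

variable (F : C ⥤ Type v) (G : Cᵒᵖ ⥤ D)

lemma coendPr_hom_ext {Z : D} {h₁ h₂ : functorTensor F G ⟶ Z}
    (H : ∀ (c : C) (w : F.obj c), coendPr F G c w ≫ h₁ = coendPr F G c w ≫ h₂) :
    h₁ = h₂ :=
  coequalizer.hom_ext <| Sigma.hom_ext _ _ fun p =>
    -- reassociated by hand: `tensorRightObj` is not reducible, so `simp` cannot match the objects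
    (Category.assoc _ _ _).symm.trans ((H p.1 p.2).trans (Category.assoc _ _ _))

lemma coendPr_map {c c' : C} (f : c ⟶ c') (w : F.obj c) :
    coendPr F G c' (F.map f w) = G.map f.op ≫ coendPr F G c w := by
  have hcond := Sigma.ι (fun p : Σ c c' : C, (c ⟶ c') × F.obj c => G.obj (op p.2.1))
    ⟨c, c', f, w⟩ ≫= coequalizer.condition (tensorMapF F G) (tensorMapG F G)
  have hF : Sigma.ι _ ⟨c, c', f, w⟩ ≫ tensorMapF F G ≫ coequalizer.π _ _ =
      coendPr F G c' (F.map f w) :=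
    Sigma.ι_desc_assoc _ _ _
  have hG : Sigma.ι _ ⟨c, c', f, w⟩ ≫ tensorMapG F G ≫ coequalizer.π _ _ =
      G.map f.op ≫ coendPr F G c w :=
    (Sigma.ι_desc_assoc _ _ _).trans (Category.assoc _ _ _)
  exact hF.symm.trans (hcond.trans hG)

lemma coendPr_map_hom_ext {E : Type*} [Category.{v} E] (L : D ⥤ E) [PreservesColimits L]
    {Z : E} {h₁ h₂ : L.obj (functorTensor F G) ⟶ Z}
    (H : ∀ (c : C) (w : F.obj c),
      L.map (coendPr F G c w) ≫ h₁ = L.map (coendPr F G c w) ≫ h₂) :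
    h₁ = h₂ := by
  refine (cancel_epi (L.map (coequalizer.π (tensorMapF F G) (tensorMapG F G)))).1 ?_
  refine (isColimitOfPreserves L (colimit.isColimit _)).hom_ext fun ⟨p⟩ => ?_
  simp only [Functor.mapCocone_ι_app, colimit.cocone_ι]
  exact (L.map_comp_assoc _ _ _).symm.trans ((H p.1 p.2).trans (L.map_comp_assoc _ _ _))

lemma coendPr_tensor_hom_ext [MonoidalCategory D]
    [∀ X : D, PreservesColimits (tensorLeft X)] [∀ X : D, PreservesColimits (tensorRight X)]
    (F' : C ⥤ Type v) (G' : Cᵒᵖ ⥤ D) {Z : D}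
    {h₁ h₂ : functorTensor F G ⊗ functorTensor F' G' ⟶ Z}
    (H : ∀ (c : C) (w : F.obj c) (c' : C) (w' : F'.obj c'),
      (coendPr F G c w ⊗ₘ coendPr F' G' c' w') ≫ h₁ =
        (coendPr F G c w ⊗ₘ coendPr F' G' c' w') ≫ h₂) :
    h₁ = h₂ :=
  coendPr_map_hom_ext F G (tensorRight _) fun c w =>
    coendPr_map_hom_ext F' G' (tensorLeft _) fun c' w' => by
      simpa [tensorHom_def'] using H c w c' w'

lemma coendPr_coyoneda (x : C) {c : C} (w : x ⟶ c) :
    coendPr (coyoneda.obj (op x)) G c w =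
      G.map w.op ≫ coendPr (coyoneda.obj (op x)) G x (𝟙 x) := by
  simpa using coendPr_map (coyoneda.obj (op x)) G w (𝟙 x)

lemma isIso_of_coendPr_coyoneda_comp (x : C)
    (Φ : functorTensor (coyoneda.obj (op x)) G ⟶ G.obj (op x))
    (hΦ : ∀ (c : C) (w : x ⟶ c), coendPr (coyoneda.obj (op x)) G c w ≫ Φ = G.map w.op) :
    IsIso Φ :=
  ⟨coendPr (coyoneda.obj (op x)) G x (𝟙 x),
    coendPr_hom_ext _ _ fun c w => by simp [reassoc_of% hΦ, ← coendPr_coyoneda],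
    by simp [hΦ]⟩

open CategoryTheory.MonoidalCategory in
/-- For a counital comonoid object `x` in `C` with comultiplication `δ` and counit `e`,
and a lax monoidal `G : Cᵒᵖ ⥤ D`, the canonical isomorphism `G ⊗_C h^x ≅ G(x)`
(given on the component indexed by `w : x ⟶ c` by `G(w)`) is an isomorphism of
monoids: it intertwines the monoid structure of the coend (induced by the lax
monoidal structures) with the monoid structure on `G(x)` induced by the comonoid
structure of `x`. -/
theorem coend_corepresentable_monoid_iso
    [MonoidalCategory C] [MonoidalCategory D] [BraidedCategory D]
    [∀ X : D, PreservesColimits (tensorLeft X)]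
    [∀ X : D, PreservesColimits (tensorRight X)]
    (x : C) (δ : x ⟶ x ⊗ x) (e : x ⟶ 𝟙_ C)
    (hcoassoc : δ ≫ (δ ▷ x) ≫ (α_ x x x).hom = δ ≫ (x ◁ δ))
    (hcounit_left : δ ≫ (e ▷ x) ≫ (λ_ x).hom = 𝟙 x)
    (hcounit_right : δ ≫ (x ◁ e) ≫ (ρ_ x).hom = 𝟙 x)
    (G : LaxMonoidalFunctor Cᵒᵖ D)
    -- the canonical comparison map, characterized on coprojections
    (Φ : functorTensor (coyoneda.obj (op x)) G.toFunctor ⟶ G.obj (op x))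
    (hΦ : ∀ (c : C) (w : x ⟶ c),
      coendPr (coyoneda.obj (op x)) G.toFunctor c w ≫ Φ = G.map w.op)
    -- the induced monoid structure on the coend
    (mul : functorTensor (coyoneda.obj (op x)) G.toFunctor ⊗
        functorTensor (coyoneda.obj (op x)) G.toFunctor ⟶
        functorTensor (coyoneda.obj (op x)) G.toFunctor)
    (unit : 𝟙_ D ⟶ functorTensor (coyoneda.obj (op x)) G.toFunctor)
    (hmul : ∀ (c c' : C) (w : x ⟶ c) (w' : x ⟶ c'),
      (coendPr (coyoneda.obj (op x)) G.toFunctor c w ⊗ₘ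
          coendPr (coyoneda.obj (op x)) G.toFunctor c' w') ≫ mul =
        Functor.LaxMonoidal.μ G.toFunctor (op c) (op c') ≫
          coendPr (coyoneda.obj (op x)) G.toFunctor (c ⊗ c') (δ ≫ (w ⊗ₘ w')))
    (hunit : unit = Functor.LaxMonoidal.ε G.toFunctor ≫
      coendPr (coyoneda.obj (op x)) G.toFunctor (𝟙_ C) e) :
    IsIso Φ ∧
      mul ≫ Φ = (Φ ⊗ₘ Φ) ≫ Functor.LaxMonoidal.μ G.toFunctor (op x) (op x) ≫ G.map δ.op ∧
      unit ≫ Φ = Functor.LaxMonoidal.ε G.toFunctor ≫ G.map e.op := by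
  refine ⟨isIso_of_coendPr_coyoneda_comp G.toFunctor x Φ hΦ, ?_,
    by rw [hunit, Category.assoc, hΦ]⟩
  refine coendPr_tensor_hom_ext _ _ _ _ fun c w c' w' => ?_
  rw [reassoc_of% hmul, hΦ, tensorHom_comp_tensorHom_assoc, hΦ, hΦ,
    Functor.LaxMonoidal.μ_natural_assoc, op_comp, Functor.map_comp, op_tensor_op]

end
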